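/- arXiv:1312.4043 — 4 statements merged into one kernel-verified Lean document; each statement's English description precedes it below -/
import Mathlib

section
/- Mutual exclusion for the integer ticket protocol: in any reachable global state of the system where each thread t has a program counter pc(t) ∈ {1,…,7} and a ticket ticket(t) ∈ ℤ, with globals avail (next ticket) and min (minimum outstanding ticket), the following three properties are simultaneously inductive invariants: (activelow) pc(t) ∈ {4,5,6} → ticket(t) < avail; (notsame) t ≠ t' ∧ pc(t) ∈ {4,5,6} ∧ pc(t') ∈ {4,5,6} → ticket(t) ≠ ticket(t'); (minticket) pc(t) ∈ {5,6} → min = ticket(t). In particular, mutual exclusion holds: no two distinct threads have pc in {5,6} simultaneously. -/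
/-- Global state of the integer ticket protocol. -/
structure IState (T : Type*) where
  avail : ℤ
  tmin : ℤ
  pc : T → Fin 8
  ticket : T → ℤ

/-- Initial condition: counters at 0, every thread at location 1 with ticket 0. -/
def IInit {T : Type*} (s : IState T) : Prop :=
  s.avail = 0 ∧ s.tmin = 0 ∧ (∀ t, s.pc t = 1) ∧ (∀ t, s.ticket t = 0)

/-- The transitions of thread `a` in the integer ticket protocol. -/
def IStep {T : Type*} [DecidableEq T] (a : T) (s s' : IState T) : Prop :=
  -- τ₁ : 1 → 2
  (s.pc a = 1 ∧ s'.pc = Function.update s.pc a 2 ∧ s'.ticket = s.ticket ∧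
    s'.avail = s.avail ∧ s'.tmin = s.tmin) ∨
  -- τ₂ : 2 → 3
  (s.pc a = 2 ∧ s'.pc = Function.update s.pc a 3 ∧ s'.ticket = s.ticket ∧
    s'.avail = s.avail ∧ s'.tmin = s.tmin) ∨
  -- τ₃ : 3 → 4, takes a fresh ticket
  (s.pc a = 3 ∧ s'.pc = Function.update s.pc a 4 ∧
    s'.ticket = Function.update s.ticket a s.avail ∧
    s'.avail = s.avail + 1 ∧ s'.tmin = s.tmin) ∨
  -- τ₄ : 4 → 5, guarded by min = ticket(a)
  (s.pc a = 4 ∧ s.tmin = s.ticket a ∧ s'.pc = Function.update s.pc a 5 ∧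
    s'.ticket = s.ticket ∧ s'.avail = s.avail ∧ s'.tmin = s.tmin) ∨
  -- τ₅ : 5 → 6
  (s.pc a = 5 ∧ s'.pc = Function.update s.pc a 6 ∧ s'.ticket = s.ticket ∧
    s'.avail = s.avail ∧ s'.tmin = s.tmin) ∨
  -- τ₆ : 6 → 7, updates min to the minimum of the remaining active tickets
  (s.pc a = 6 ∧ s'.pc = Function.update s.pc a 7 ∧ s'.ticket = s.ticket ∧
    s'.avail = s.avail ∧
    ((Set.Nonempty {z : ℤ | ∃ t', t' ≠ a ∧ (s.pc t' = 4 ∨ s.pc t' = 5) ∧ s.ticket t' = z} →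
        IsLeast {z : ℤ | ∃ t', t' ≠ a ∧ (s.pc t' = 4 ∨ s.pc t' = 5) ∧ s.ticket t' = z} s'.tmin) ∧
     (¬ Set.Nonempty {z : ℤ | ∃ t', t' ≠ a ∧ (s.pc t' = 4 ∨ s.pc t' = 5) ∧ s.ticket t' = z} →
        s'.tmin = s.avail))) ∨
  -- τ₇ : 7 → 1
  (s.pc a = 7 ∧ s'.pc = Function.update s.pc a 1 ∧ s'.ticket = s.ticket ∧
    s'.avail = s.avail ∧ s'.tmin = s.tmin)

/-- A state is reachable if obtained from an initial state by finitely many transitions. -/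
def IReachable {T : Type*} [DecidableEq T] (s : IState T) : Prop :=
  ∃ s₀, IInit s₀ ∧ Relation.ReflTransGen (fun u v => ∃ a, IStep a u v) s₀ s

/-! Activelow, notsame and minticket hold initially and are preserved by every transition;
taking a ticket preserves notsame because the new ticket `avail` exceeds every outstanding one.
Two distinct critical threads would both hold the ticket `min`, contradicting notsame, and
this mutual exclusion is also what keeps minticket true when `min` is reassigned at τ₆. -/

/-- Locations 4–6: the thread holds a ticket. -/
def IsActive (l : Fin 8) : Prop := l = 4 ∨ l = 5 ∨ l = 6

/-- Locations 5–6: the critical section. -/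
def IsCritical (l : Fin 8) : Prop := l = 5 ∨ l = 6

theorem IsCritical.isActive {l : Fin 8} (h : IsCritical l) : IsActive l := Or.inr h

theorem Function.of_update_apply {α β : Type*} [DecidableEq α] {p : β → Prop} {f : α → β}
    {a : α} {v : β} (hv : p v → p (f a)) (t : α) :
    p (Function.update f a v t) → p (f t) := by
  rcases eq_or_ne t a with rfl | hta
  · simpa using hv
  · simp [Function.update_of_ne hta]

namespace IState

variable {T : Type*} {s s' : IState T} {a t t' : T}

structure Inv (s : IState T) : Prop where
  ticket_lt_avail : ∀ t, IsActive (s.pc t) → s.ticket t < s.avail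
  injOn_ticket : Set.InjOn s.ticket {t | IsActive (s.pc t)}
  tmin_eq_ticket : ∀ t, IsCritical (s.pc t) → s.tmin = s.ticket t

theorem inv_of_init (h : IInit s) : s.Inv := by
  obtain ⟨-, -, hpc, -⟩ := h
  refine ⟨fun t ht => ?_, fun t ht => ?_, fun t ht => ?_⟩ <;>
    simp [IsActive, IsCritical, hpc t] at ht

theorem Inv.eq_of_isCritical (h : s.Inv) (ht : IsCritical (s.pc t))
    (ht' : IsCritical (s.pc t')) : t = t' :=
  h.injOn_ticket ht.isActive ht'.isActive
    ((h.tmin_eq_ticket t ht).symm.trans (h.tmin_eq_ticket t' ht'))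

theorem Inv.mono (h : s.Inv) (hact : ∀ t, IsActive (s'.pc t) → IsActive (s.pc t))
    (hcrit : ∀ t, IsCritical (s'.pc t) → IsCritical (s.pc t)) (hticket : s'.ticket = s.ticket)
    (havail : s'.avail = s.avail) (htmin : ∀ t, IsCritical (s'.pc t) → s'.tmin = s.tmin) :
    s'.Inv where
  ticket_lt_avail t ht := hticket ▸ havail ▸ h.ticket_lt_avail t (hact t ht)
  injOn_ticket := hticket ▸ h.injOn_ticket.mono hact
  tmin_eq_ticket t ht := hticket ▸ htmin t ht ▸ h.tmin_eq_ticket t (hcrit t ht)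

theorem Inv.of_move [DecidableEq T] {v : Fin 8} (h : s.Inv)
    (hpc' : s'.pc = Function.update s.pc a v)
    (hact : IsActive v → IsActive (s.pc a)) (hcrit : IsCritical v → IsCritical (s.pc a))
    (hticket : s'.ticket = s.ticket) (havail : s'.avail = s.avail) (htmin : s'.tmin = s.tmin) :
    s'.Inv :=
  h.mono (hpc' ▸ Function.of_update_apply hact) (hpc' ▸ Function.of_update_apply hcrit)
    hticket havail fun _ _ => htmin

theorem Inv.take_ticket [DecidableEq T] (h : s.Inv) (hpc' : s'.pc = Function.update s.pc a 4)
    (hticket : s'.ticket = Function.update s.ticket a s.avail) (havail : s'.avail = s.avail + 1)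
    (htmin : s'.tmin = s.tmin) : s'.Inv := by
  have hold : ∀ t, t ≠ a → s'.pc t = s.pc t ∧ s'.ticket t = s.ticket t := fun t hta => by
    simp [hpc', hticket, Function.update_of_ne hta]
  have hnew : s'.ticket a = s.avail := by simp [hticket]
  have hlt : ∀ t, t ≠ a → IsActive (s'.pc t) → s'.ticket t < s.avail := fun t hta ht =>
    (hold t hta).2 ▸ h.ticket_lt_avail t ((hold t hta).1 ▸ ht)
  refine ⟨fun t ht => ?_, fun t ht t' ht' heq => ?_, fun t ht => ?_⟩
  · rcases eq_or_ne t a with rfl | hta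
    · omega
    · have := hlt t hta ht
      omega
  · rcases eq_or_ne t a with hta | hta <;> rcases eq_or_ne t' a with ht'a | ht'a
    · exact hta.trans ht'a.symm
    · exact absurd (hta ▸ heq) (hnew ▸ hlt t' ht'a ht').ne'
    · exact absurd (ht'a ▸ heq) (hnew ▸ hlt t hta ht).ne
    · exact h.injOn_ticket (show IsActive (s.pc t) from (hold t hta).1 ▸ ht)
        (show IsActive (s.pc t') from (hold t' ht'a).1 ▸ ht')
        ((hold t hta).2 ▸ (hold t' ht'a).2 ▸ heq)
  · have hta : t ≠ a := by rintro rfl; simp [hpc', IsCritical] at ht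
    rw [htmin, (hold t hta).2]
    exact h.tmin_eq_ticket t ((hold t hta).1 ▸ ht)

theorem Inv.enter [DecidableEq T] (h : s.Inv) (hpc : s.pc a = 4) (hguard : s.tmin = s.ticket a)
    (hpc' : s'.pc = Function.update s.pc a 5) (hticket : s'.ticket = s.ticket)
    (havail : s'.avail = s.avail) (htmin : s'.tmin = s.tmin) : s'.Inv := by
  have hact : ∀ t, IsActive (s'.pc t) → IsActive (s.pc t) := fun t => by
    rcases eq_or_ne t a with rfl | hta
    · simp [hpc', hpc, IsActive]
    · simp [hpc', Function.update_of_ne hta]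
  refine ⟨fun t ht => ?_, hticket ▸ h.injOn_ticket.mono hact, fun t ht => ?_⟩
  · rw [hticket, havail]
    exact h.ticket_lt_avail t (hact t ht)
  · rw [htmin, hticket]
    rcases eq_or_ne t a with rfl | hta
    · exact hguard
    · exact h.tmin_eq_ticket t (by simpa [hpc', Function.update_of_ne hta] using ht)

/-- The new value of `tmin` is irrelevant: by mutual exclusion no thread is critical afterwards. -/
theorem Inv.leave [DecidableEq T] (h : s.Inv) (hpc : s.pc a = 6)
    (hpc' : s'.pc = Function.update s.pc a 7) (hticket : s'.ticket = s.ticket)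
    (havail : s'.avail = s.avail) : s'.Inv := by
  have hnone : ∀ t, ¬ IsCritical (s'.pc t) := fun t ht => by
    rcases eq_or_ne t a with rfl | hta
    · simp [hpc', IsCritical] at ht
    · rw [hpc', Function.update_of_ne hta] at ht
      exact hta (h.eq_of_isCritical ht (Or.inr hpc))
  exact h.mono (hpc' ▸ Function.of_update_apply (by simp [IsActive, hpc]))
    (fun t ht => absurd ht (hnone t)) hticket havail (fun t ht => absurd ht (hnone t))

theorem Inv.step [DecidableEq T] (h : s.Inv) (hstep : IStep a s s') : s'.Inv := by
  rcases hstep with ⟨-, hpc', hticket, havail, htmin⟩ | ⟨-, hpc', hticket, havail, htmin⟩ |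
    ⟨-, hpc', hticket, havail, htmin⟩ | ⟨hpc, hguard, hpc', hticket, havail, htmin⟩ |
    ⟨hpc, hpc', hticket, havail, htmin⟩ | ⟨hpc, hpc', hticket, havail, -⟩ |
    ⟨-, hpc', hticket, havail, htmin⟩
  · exact h.of_move hpc' (by simp [IsActive]) (by simp [IsCritical]) hticket havail htmin
  · exact h.of_move hpc' (by simp [IsActive]) (by simp [IsCritical]) hticket havail htmin
  · exact h.take_ticket hpc' hticket havail htmin
  · exact h.enter hpc hguard hpc' hticket havail htmin
  · exact h.of_move hpc' (by simp [IsActive, hpc]) (by simp [IsCritical, hpc]) hticket havail htmin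
  · exact h.leave hpc hpc' hticket havail
  · exact h.of_move hpc' (by simp [IsActive]) (by simp [IsCritical]) hticket havail htmin

theorem inv_of_reachable [DecidableEq T] (h : IReachable s) : s.Inv := by
  obtain ⟨s₀, h₀, hreach⟩ := h
  induction hreach with
  | refl => exact inv_of_init h₀
  | tail _ hstep ih => exact ih.step hstep.choose_spec

end IState

theorem intTicket_mutex {T : Type*} [DecidableEq T] :
    ∀ s : IState T, IReachable s →
      ((∀ t, (s.pc t = 4 ∨ s.pc t = 5 ∨ s.pc t = 6) → s.ticket t < s.avail) ∧
       (∀ t t', t ≠ t' → (s.pc t = 4 ∨ s.pc t = 5 ∨ s.pc t = 6) →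
          (s.pc t' = 4 ∨ s.pc t' = 5 ∨ s.pc t' = 6) → s.ticket t ≠ s.ticket t') ∧
       (∀ t, (s.pc t = 5 ∨ s.pc t = 6) → s.tmin = s.ticket t)) ∧
      (∀ t t', t ≠ t' →
        ¬ ((s.pc t = 5 ∨ s.pc t = 6) ∧ (s.pc t' = 5 ∨ s.pc t' = 6))) := by
  intro s hs
  have h := IState.inv_of_reachable hs
  exact ⟨⟨h.ticket_lt_avail, fun t t' hne ht ht' heq => hne (h.injOn_ticket ht ht' heq),
    h.tmin_eq_ticket⟩, fun t t' hne ⟨ht, ht'⟩ => hne (h.eq_of_isCritical ht ht')⟩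
end

section
/- In the abstract parametrized setting, if a 1-index parametrized property P : T → State → Prop satisfies: (i) P i holds in all initial states for every thread i, (ii) for every thread i and every transition τ_ℓ[i] of thread i, P i is preserved, and (iii) for all distinct threads i ≠ j, if P i and P j hold at s and thread j takes any transition to s', then P i holds at s' (self-supported P3'), then for every thread i, P i holds at every reachable state (soundness of P-INV with self-support for 1-index invariants). -/
/-- A parametrized system: global states `G`, thread identifiers `T`,
locations `L`, per-thread-per-location transition relations, and initial states. -/
structure ParamSys (G T L : Type*) where
  init : Set G
  step : L → T → G → G → Prop

def ParamSys.Reachable {G T L : Type*} (M : ParamSys G T L) (s : G) : Prop :=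
  ∃ s₀ ∈ M.init, Relation.ReflTransGen (fun u v => ∃ ℓ i, M.step ℓ i u v) s₀ s

/-! Self-support is only available for the conjunction of `P i` over all threads, so that
conjunction, not each `P i` separately, is the inductive invariant. -/

namespace ParamSys

variable {G T L : Type*} {M : ParamSys G T L}

theorem Reachable.of_inductive {I : G → Prop} (hinit : ∀ s ∈ M.init, I s)
    (hstep : ∀ (ℓ : L) (i : T) (s s' : G), I s → M.step ℓ i s s' → I s')
    {s : G} (hs : M.Reachable s) : I s := by
  obtain ⟨s₀, hs₀, hpath⟩ := hs
  induction hpath with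
  | refl => exact hinit s₀ hs₀
  | tail _ hlast ih =>
    obtain ⟨ℓ, i, hlast⟩ := hlast
    exact hstep ℓ i _ _ ih hlast

end ParamSys

theorem p_inv_self_support_sound {G T L : Type*} (M : ParamSys G T L)
    (P : T → G → Prop)
    (hinit : ∀ i : T, ∀ s ∈ M.init, P i s)
    (hself : ∀ (i : T) (ℓ : L) (s s' : G), P i s → M.step ℓ i s s' → P i s')
    (hother : ∀ i j : T, i ≠ j → ∀ (ℓ : L) (s s' : G),
      P i s → P j s → M.step ℓ j s s' → P i s') :
    ∀ i : T, ∀ s : G, M.Reachable s → P i s := by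
  have hstep : ∀ (ℓ : L) (j : T) (s s' : G), (∀ i, P i s) → M.step ℓ j s s' → ∀ i, P i s' := by
    intro ℓ j s s' hs hjs i
    by_cases hij : i = j
    · subst hij
      exact hself i ℓ s s' (hs i) hjs
    · exact hother i j hij ℓ s s' (hs i) (hs j) hjs
  intro i s hs
  exact ParamSys.Reachable.of_inductive (fun s hs₀ i => hinit i s hs₀) hstep hs i
end

section
/- Concretization for 2-index symmetric properties: let the system be fully symmetric via thread-swap bijections, and let P : T × T → State → Prop be a parametrized predicate compatible with swaps (P (σ i, σ j) (σ · s) ↔ P (i,j) s for every swap σ). If P(a,b) holds at all reachable states for two fixed distinct threads a, b, then P(i,j) holds at all reachable states for every pair of distinct threads i, j. -/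
/-- A parametrized system: global states `G`, thread identifiers `T`,
per-thread transition relations, and initial states. -/
structure PSys (G T : Type*) where
  init : Set G
  step : T → G → G → Prop

def PSys.Reachable {G T : Type*} (M : PSys G T) (s : G) : Prop :=
  ∃ s₀ ∈ M.init, Relation.ReflTransGen (fun u v => ∃ a, M.step a u v) s₀ s

/-!
Each swap symmetry `π k l` maps initial states to initial states and transitions to
transitions, so it preserves reachability. By compatibility of `P`, an invariant `P x y`
therefore transports to the invariant `P (swap k l x) (swap k l y)`. Two swaps carry any
pair of distinct threads to any other: `swap a i` sends `(a, b)` to `(i, b')` with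
`b' ≠ i`, and `swap b' j` then sends it to `(i, j)`.
-/

theorem PSys.Reachable.map {G G' T T' : Type*} {M : PSys G T} {N : PSys G' T'}
    (f : G → G') (g : T → T') (hinit : ∀ s ∈ M.init, f s ∈ N.init)
    (hstep : ∀ k s s', M.step k s s' → N.step (g k) (f s) (f s'))
    {s : G} (hs : M.Reachable s) : N.Reachable (f s) := by
  obtain ⟨s₀, hs₀, hrt⟩ := hs
  exact ⟨f s₀, hinit s₀ hs₀, hrt.lift f fun u v ⟨k, huv⟩ => ⟨g k, hstep k u v huv⟩⟩

theorem Equiv.forall_ne_of_swap_invariant {T : Type*} [DecidableEq T] {Q : T → T → Prop}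
    (hQ : ∀ k l x y, Q x y → Q (swap k l x) (swap k l y))
    {a b : T} (hab : a ≠ b) (hQab : Q a b) {i j : T} (hij : i ≠ j) : Q i j := by
  set b' := swap a i b
  have hb' : b' ≠ i := by
    rw [← swap_apply_left a i]
    exact (swap a i).injective.ne hab.symm
  have hib' : Q i b' := by simpa only [swap_apply_left] using hQ a i a b hQab
  simpa only [swap_apply_left, swap_apply_of_ne_of_ne hb'.symm hij] using hQ b' j i b' hib'

theorem concretization_two_index_general {G T : Type*} [DecidableEq T] (M : PSys G T)
    (π : T → T → G → G)
    (hinv : ∀ (i j : T) (s : G), π i j (π i j s) = s)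
    (hinit : ∀ (i j : T) (s : G), s ∈ M.init ↔ π i j s ∈ M.init)
    (hstep : ∀ (i j k : T) (s s' : G),
      M.step k s s' ↔ M.step (Equiv.swap i j k) (π i j s) (π i j s'))
    (P : T → T → G → Prop)
    (hcompat : ∀ (k l i j : T) (s : G),
      P i j s ↔ P (Equiv.swap k l i) (Equiv.swap k l j) (π k l s))
    (a b : T) (hab : a ≠ b)
    (hP : ∀ s : G, M.Reachable s → P a b s) :
    ∀ i j : T, i ≠ j → ∀ s : G, M.Reachable s → P i j s := by
  have hreach : ∀ (k l : T) (s : G), M.Reachable s → M.Reachable (π k l s) := fun k l _ hs =>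
    hs.map (π k l) (Equiv.swap k l) (fun s => (hinit k l s).mp)
      (fun c s s' => (hstep k l c s s').mp)
  have htransport : ∀ k l x y, (∀ s, M.Reachable s → P x y s) →
      ∀ s, M.Reachable s → P (Equiv.swap k l x) (Equiv.swap k l y) s := by
    intro k l x y hxy s hs
    simpa only [hinv] using (hcompat k l x y (π k l s)).mp (hxy _ (hreach k l s hs))
  intro i j hij
  exact Equiv.forall_ne_of_swap_invariant htransport hab hP hij

theorem concretization_two_index {G T : Type*} [DecidableEq T] (M : PSys G T)
    (π : T → T → G → G)
    (hbij : ∀ i j : T, Function.Bijective (π i j))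
    (hinv : ∀ (i j : T) (s : G), π i j (π i j s) = s)
    (hinit : ∀ (i j : T) (s : G), s ∈ M.init ↔ π i j s ∈ M.init)
    (hstep : ∀ (i j k : T) (s s' : G),
      M.step k s s' ↔ M.step (Equiv.swap i j k) (π i j s) (π i j s'))
    (P : T → T → G → Prop)
    (hcompat : ∀ (k l i j : T) (s : G),
      P i j s ↔ P (Equiv.swap k l i) (Equiv.swap k l j) (π k l s))
    (a b : T) (hab : a ≠ b)
    (hP : ∀ s : G, M.Reachable s → P a b s) :
    ∀ i j : T, i ≠ j → ∀ s : G, M.Reachable s → P i j s :=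
  concretization_two_index_general M π hinv hinit hstep P hcompat a b hab hP
end

section
/- In the integer ticket protocol, tickets held by active threads are pairwise distinct and each ticket value is assigned to at most one active thread ever simultaneously: formally, the predicate notsame(i,j) := (i ≠ j ∧ pc(i) ∈ {4,5,6} ∧ pc(j) ∈ {4,5,6}) → ticket(i) ≠ ticket(j) is an inductive invariant when supported by activelow(i) := pc(i) ∈ {4,5,6} → ticket(i) < avail, i.e., the conjunction (∀ i, activelow i) ∧ (∀ i j, notsame i j) holds in the initial state and is preserved by every transition of every thread. -/
/-- `activelow(i) ∧ notsame(i,j)` for all threads. -/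
def ActiveLowNotSame {T : Type*} (s : IState T) : Prop :=
  (∀ i, (s.pc i = 4 ∨ s.pc i = 5 ∨ s.pc i = 6) → s.ticket i < s.avail) ∧
  (∀ i j, (i ≠ j ∧ (s.pc i = 4 ∨ s.pc i = 5 ∨ s.pc i = 6) ∧
      (s.pc j = 4 ∨ s.pc j = 5 ∨ s.pc j = 6)) → s.ticket i ≠ s.ticket j)

/-!
Only τ₃ changes tickets or `avail`: it hands thread `a` the ticket `avail`, which by `activelow`
exceeds every ticket currently held at locations 4–6, and then increments `avail`. So the new
ticket is distinct from all active ones and both invariants survive. Every other transition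
fixes tickets and `avail` and can only make a thread active by moving it within 4–6.
-/

abbrev IsActiveLoc (v : Fin 8) : Prop := v = 4 ∨ v = 5 ∨ v = 6

theorem IsActiveLoc.of_update {T : Type*} [DecidableEq T] {pc : T → Fin 8} {a t : T} {v : Fin 8}
    (hv : IsActiveLoc v → IsActiveLoc (pc a)) (h : IsActiveLoc (Function.update pc a v t)) :
    IsActiveLoc (pc t) := by
  rcases eq_or_ne t a with rfl | hta
  · exact hv (by simpa using h)
  · simpa [hta] using h

namespace ActiveLowNotSame

variable {T : Type*} {s s' : IState T}

theorem of_init (hs : IInit s) : ActiveLowNotSame s := by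
  have inactive : ∀ i, ¬ IsActiveLoc (s.pc i) := fun i => by rw [hs.2.2.1 i]; decide
  exact ⟨fun i hi => (inactive i hi).elim, fun i _ h => (inactive i h.2.1).elim⟩

theorem mono (h : ActiveLowNotSame s)
    (hact : ∀ t, IsActiveLoc (s'.pc t) → IsActiveLoc (s.pc t))
    (ht : s'.ticket = s.ticket) (hv : s'.avail = s.avail) : ActiveLowNotSame s' := by
  refine ⟨fun i hi => ?_, fun i j ⟨hij, hi, hj⟩ => ?_⟩
  · rw [ht, hv]
    exact h.1 i (hact i hi)
  · rw [ht]
    exact h.2 i j ⟨hij, hact i hi, hact j hj⟩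

theorem of_update_pc [DecidableEq T] {a : T} {v : Fin 8} (h : ActiveLowNotSame s)
    (hpc : s'.pc = Function.update s.pc a v) (ht : s'.ticket = s.ticket)
    (hv : s'.avail = s.avail) (hloc : IsActiveLoc v → IsActiveLoc (s.pc a)) :
    ActiveLowNotSame s' :=
  h.mono (fun _ hact => IsActiveLoc.of_update hloc (hpc ▸ hact)) ht hv

theorem of_take_ticket [DecidableEq T] {a : T} (h : ActiveLowNotSame s)
    (hpc : ∀ t ≠ a, s'.pc t = s.pc t) (ht : s'.ticket = Function.update s.ticket a s.avail)
    (hv : s'.avail = s.avail + 1) : ActiveLowNotSame s' := by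
  have below : ∀ t ≠ a, IsActiveLoc (s'.pc t) → s'.ticket t < s'.ticket a := fun t hta hact => by
    rw [ht, Function.update_of_ne hta, Function.update_self]
    exact h.1 t (hpc t hta ▸ hact)
  have fresh : s'.ticket a < s'.avail := by simp [ht, hv]
  refine ⟨fun i hi => ?_, fun i j ⟨hij, hi, hj⟩ => ?_⟩
  · rcases eq_or_ne i a with rfl | hia
    · exact fresh
    · exact (below i hia hi).trans fresh
  · rcases eq_or_ne i a with rfl | hia
    · exact (below j (Ne.symm hij) hj).ne'
    rcases eq_or_ne j a with rfl | hja
    · exact (below i hia hi).ne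
    rw [ht, Function.update_of_ne hia, Function.update_of_ne hja]
    exact h.2 i j ⟨hij, hpc i hia ▸ hi, hpc j hja ▸ hj⟩

end ActiveLowNotSame

theorem intTicket_notsame_inductive {T : Type*} [DecidableEq T] :
    (∀ s : IState T, IInit s → ActiveLowNotSame s) ∧
    (∀ (s s' : IState T) (a : T), ActiveLowNotSame s → IStep a s s' →
      ActiveLowNotSame s') := by
  refine ⟨fun s hs => .of_init hs, fun s s' a h hstep => ?_⟩
  rcases hstep with ⟨-, hpc, ht, hv, -⟩ | ⟨-, hpc, ht, hv, -⟩ | ⟨-, hpc, ht, hv, -⟩ |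
    ⟨hp, -, hpc, ht, hv, -⟩ | ⟨hp, hpc, ht, hv, -⟩ | ⟨-, hpc, ht, hv, -⟩ | ⟨-, hpc, ht, hv, -⟩
  · exact h.of_update_pc hpc ht hv (absurd · (by decide))
  · exact h.of_update_pc hpc ht hv (absurd · (by decide))
  · exact h.of_take_ticket (fun t hta => by rw [hpc, Function.update_of_ne hta]) ht hv
  · exact h.of_update_pc hpc ht hv fun _ => Or.inl hp
  · exact h.of_update_pc hpc ht hv fun _ => Or.inr (Or.inl hp)
  · exact h.of_update_pc hpc ht hv (absurd · (by decide))
  · exact h.of_update_pc hpc ht hv (absurd · (by decide))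
end
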